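/- For any pasting context Γ ⊢_ps in CaTT and any variable x ∈ Var(Γ) that does not occur in the type of any variable of Γ (i.e., x is of depth 0 in Γ) and satisfies dim(x) < dim(Γ), the variable x belongs to the variables of both boundaries: x ∈ Var(∂⁻Γ) and x ∈ Var(∂⁺Γ). -/

import Mathlib

namespace Catt

mutual
inductive Ty : Type where
  | obj : Ty
  | arr : Ty → Tm → Tm → Ty
inductive Tm : Type where
  | var : ℕ → Tm
  | coh : List (ℕ × Ty) → Ty → List (ℕ × Tm) → Tm
end

abbrev Ctx := List (ℕ × Ty)
abbrev Sub := List (ℕ × Tm)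

def lookupSub (γ : Sub) (x : ℕ) : Tm :=
  match γ with
  | [] => .var x
  | (y, t) :: γ' => if x = y then t else lookupSub γ' x

mutual
def Ty.subst : Ty → Sub → Ty
  | .obj, _ => .obj
  | .arr A u v, γ => .arr (A.subst γ) (u.subst γ) (v.subst γ)
def Tm.subst : Tm → Sub → Tm
  | .var x, γ => lookupSub γ x
  | .coh Δ A δ, γ => .coh Δ A (Sub.comp δ γ)
def Sub.comp : Sub → Sub → Sub
  | [], _ => []
  | (x, t) :: δ, γ => (x, Tm.subst t γ) :: Sub.comp δ γ
end

mutual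
def Tm.vars : Tm → Finset ℕ
  | .var x => {x}
  | .coh _ _ γ => Sub.vars γ
def Sub.vars : Sub → Finset ℕ
  | [] => ∅
  | (_, t) :: γ => Tm.vars t ∪ Sub.vars γ
end

def Ty.vars : Ty → Finset ℕ
  | .obj => ∅
  | .arr A u v => A.vars ∪ u.vars ∪ v.vars

def ctxVars : Ctx → Finset ℕ
  | [] => ∅
  | (x, _) :: Γ => insert x (ctxVars Γ)

/-- Dimension of a type (`dim ⋆ = -1`). -/
def Ty.dim : Ty → ℤ
  | .obj => -1
  | .arr A _ _ => A.dim + 1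

/-- Dimension of a context. -/
def ctxDim : Ctx → ℤ
  | [] => -1
  | (_, A) :: Γ => max (A.dim + 1) (ctxDim Γ)

/-- Type of a variable in a context (most recent binding). -/
def lookupTy : Ctx → ℕ → Ty
  | [], _ => .obj
  | (y, A) :: Γ, x => if x = y then A else lookupTy Γ x

/-- Dimension of a variable of a context. -/
def varDim (Γ : Ctx) (x : ℕ) : ℤ := (lookupTy Γ x).dim + 1

/-- Max of a finite set of integers, with `max ∅ = -1`. -/
def fmax (s : Finset ℤ) : ℤ := WithBot.unbotD (-1) s.max

/-- Depth of a term `Γ ⊢ t : A` with respect to a set `X` of variables. -/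
def depthTm (Γ : Ctx) (X : Finset ℕ) (t : Tm) (A : Ty) : ℤ :=
  fmax (((Tm.vars t ∪ Ty.vars A) ∩ X).image (fun x => (A.dim + 1) - varDim Γ x))

/-- Depth of a type with respect to a set `X` of variables. -/
def depthTy (Γ : Ctx) (X : Finset ℕ) (A : Ty) : ℤ :=
  fmax ((Ty.vars A ∩ X).image (fun x => A.dim - varDim Γ x))

/-- Depth of a substitution `Γ ⊢ σ : Δ` with respect to `X ⊆ Var Γ`. -/
def depthSub (Γ : Ctx) (X : Finset ℕ) (σ : Sub) (Δ : Ctx) : ℤ :=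
  fmax ((ctxVars Δ).image
    (fun x => depthTm Γ X (Tm.subst (.var x) σ) (Ty.subst (lookupTy Δ x) σ)))

/-- Identity substitution of a context. -/
def idSub : Ctx → Sub
  | [] => []
  | (x, _) :: Γ => (x, .var x) :: idSub Γ

/-- Depth of a context with respect to `X`. -/
def depthCtx (Γ : Ctx) (X : Finset ℕ) : ℤ := depthSub Γ X (idSub Γ) Γ

/-- `X` is an up-closed set of variables of `Γ`. -/
def upClosed (Γ : Ctx) (X : Finset ℕ) : Prop :=
  (∀ x ∈ X, x ∈ ctxVars Γ) ∧
    ∀ y A, (y, A) ∈ Γ → ∀ x ∈ X, x ∈ Ty.vars A → y ∈ X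

/-- Preimage `γ⁻¹ X` of a set of variables under a substitution into `Δ`. -/
def preimage (γ : Sub) (Δ : Ctx) (X : Finset ℕ) : Finset ℕ :=
  (ctxVars Δ).filter (fun x => ((Tm.vars (Tm.subst (.var x) γ)) ∩ X).Nonempty)

/-- The pasting-context judgement `Γ ⊢ps t : A`. -/
inductive Ps : Ctx → Tm → Ty → Prop where
  | base (x : ℕ) : Ps [(x, .obj)] (.var x) .obj
  | ext {Γ : Ctx} {x : ℕ} {A : Ty} (y f : ℕ) :
      Ps Γ (.var x) A → y ∉ ctxVars Γ → f ∉ ctxVars Γ → y ≠ f →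
      Ps ((f, .arr A (.var x) (.var y)) :: (y, A) :: Γ) (.var f)
        (.arr A (.var x) (.var y))
  | down {Γ : Ctx} {f : ℕ} {A : Ty} {u v : Tm} :
      Ps Γ (.var f) (.arr A u v) → Ps Γ v A

/-- `Γ` is a pasting context. -/
def PsCtx (Γ : Ctx) : Prop := ∃ x, Ps Γ (.var x) .obj

/-- The `i`-dimensional boundary of a pasting context
(`ε = false` for the source, `ε = true` for the target). -/
def bdry (ε : Bool) (i : ℤ) : Ctx → Ctx
  | [] => []
  | [p] => [p]
  | (f, Af) :: (y, Ay) :: Γ =>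
    if ε then
      (if Ay.dim > i - 1 then bdry ε i Γ
       else if Ay.dim = i - 1 then (y, Ay) :: (bdry ε i Γ).drop 1
       else (f, Af) :: (y, Ay) :: bdry ε i Γ)
    else
      (if Ay.dim ≥ i - 1 then bdry ε i Γ
       else (f, Af) :: (y, Ay) :: bdry ε i Γ)

/-- Codimension-1 source boundary `∂⁻Γ`. -/
def srcCtx (Γ : Ctx) : Ctx := bdry false (ctxDim Γ - 1) Γ

/-- Codimension-1 target boundary `∂⁺Γ`. -/
def tgtCtx (Γ : Ctx) : Ctx := bdry true (ctxDim Γ - 1) Γ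

/-- Fullness of a type over a pasting context: side conditions (comp) or (inv). -/
def isFull (Γ : Ctx) (A : Ty) : Prop :=
  ∃ B u v, A = .arr B u v ∧
    ((ctxVars (srcCtx Γ) = Tm.vars u ∪ Ty.vars B ∧
      ctxVars (tgtCtx Γ) = Tm.vars v ∪ Ty.vars B) ∨
     (ctxVars Γ = Tm.vars u ∪ Ty.vars B ∧
      ctxVars Γ = Tm.vars v ∪ Ty.vars B))

mutual
/-- Well-formedness of contexts. -/
inductive CtxWf : Ctx → Prop where
  | nil : CtxWf []
  | cons {Γ : Ctx} {A : Ty} {x : ℕ} :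
      CtxWf Γ → TyWf Γ A → x ∉ ctxVars Γ → CtxWf ((x, A) :: Γ)
/-- Well-formedness of types. -/
inductive TyWf : Ctx → Ty → Prop where
  | obj {Γ : Ctx} : CtxWf Γ → TyWf Γ .obj
  | arr {Γ : Ctx} {A : Ty} {u v : Tm} :
      TmWf Γ u A → TmWf Γ v A → TyWf Γ (.arr A u v)
/-- Typing of terms. -/
inductive TmWf : Ctx → Tm → Ty → Prop where
  | var {Γ : Ctx} {x : ℕ} {A : Ty} : CtxWf Γ → (x, A) ∈ Γ → TmWf Γ (.var x) A
  | coh {Γ Δ : Ctx} {A : Ty} {γ : Sub} :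
      PsCtx Δ → TyWf Δ A → isFull Δ A → SubWf Γ γ Δ →
      TmWf Γ (.coh Δ A γ) (Ty.subst A γ)
/-- Typing of substitutions. -/
inductive SubWf : Ctx → Sub → Ctx → Prop where
  | nil {Γ : Ctx} : CtxWf Γ → SubWf Γ [] []
  | cons {Γ : Ctx} {γ : Sub} {Δ : Ctx} {x : ℕ} {A : Ty} {t : Tm} :
      SubWf Γ γ Δ → TyWf Δ A → x ∉ ctxVars Δ →
      TmWf Γ t (Ty.subst A γ) → SubWf Γ ((x, t) :: γ) ((x, A) :: Δ)
end

/-- North pole variable for suspension. -/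
def vN : ℕ := 2000000000
/-- South pole variable for suspension. -/
def vS : ℕ := 2000000001

mutual
/-- Suspension of a type. -/
def Ty.susp : Ty → Ty
  | .obj => .arr .obj (.var vN) (.var vS)
  | .arr A u v => .arr (A.susp) (u.susp) (v.susp)
/-- Suspension of a term. -/
def Tm.susp : Tm → Tm
  | .var x => .var x
  | .coh Δ A γ => .coh (suspCtx Δ) (A.susp) (suspSub γ)
/-- Suspension of a context. -/
def suspCtx : List (ℕ × Ty) → List (ℕ × Ty)
  | [] => [(vS, .obj), (vN, .obj)]
  | (x, A) :: Γ => (x, A.susp) :: suspCtx Γ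
/-- Suspension of a substitution. -/
def suspSub : List (ℕ × Tm) → List (ℕ × Tm)
  | [] => [(vS, .var vS), (vN, .var vN)]
  | (x, t) :: γ => (x, t.susp) :: suspSub γ
end




/-- The data of the naturality construction of Benjamin–Markakis–Offord–Sarti–Vicary,
packaged with its defining recursive clauses (Section 3.2 of the paper).
`vminus x`, `vplus x`, `vtilde x` are the fresh variables `x⁻`, `x⁺`, `x̃`;
`star n a b` is the binary composite `a ∗ₙ b` of two `(n+1)`-cells along their
`n`-dimensional boundary; `ctxUpPM Γ X = Γ ↑± X`; `ctxUp Γ X = Γ ↑ X`;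
`injm`/`injp` are the substitutions `inj∓`; `tyUpFresh Γ A x X = A ↑ˣ X`;
`tyUpTm Γ A t X = A ↑ᵗ X`; `tmUp Γ t X = t ↑ X`; `subUp Γ γ X = γ ↑ X`;
`cohUp Γ A X = coh_{Γ,A} ↑ X`; `opCtx`/`opTy`/`opTm` are the opposite
meta-operations. -/
structure NatConstr where
  vminus : ℕ → ℕ
  vplus : ℕ → ℕ
  vtilde : ℕ → ℕ
  star : ℤ → Tm → Tm → Tm
  ctxUpPM : Ctx → Finset ℕ → Ctx
  ctxUp : Ctx → Finset ℕ → Ctx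
  injm : Ctx → Finset ℕ → Sub
  injp : Ctx → Finset ℕ → Sub
  tyUpFresh : Ctx → Ty → ℕ → Finset ℕ → Ty
  tyUpTm : Ctx → Ty → Tm → Finset ℕ → Ty
  tmUp : Ctx → Tm → Finset ℕ → Tm
  subUp : Ctx → Sub → Finset ℕ → Sub
  cohUp : Ctx → Ty → Finset ℕ → Tm
  opCtx : Finset ℤ → Ctx → Ctx
  opTy : Finset ℤ → Ty → Ty
  opTm : Finset ℤ → Tm → Tm
  /- Defining clauses: naturality of contexts. -/
  ctxUpPM_nil : ctxUpPM [] ∅ = []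
  ctxUp_nil : ctxUp [] ∅ = []
  injm_nil : injm [] ∅ = []
  injp_nil : injp [] ∅ = []
  ctxUpPM_cons_not_mem : ∀ (Γ : Ctx) (x : ℕ) (A : Ty) (X : Finset ℕ), x ∉ X →
    ctxUpPM ((x, A) :: Γ) X = (x, A) :: ctxUp Γ X
  ctxUp_cons_not_mem : ∀ (Γ : Ctx) (x : ℕ) (A : Ty) (X : Finset ℕ), x ∉ X →
    ctxUp ((x, A) :: Γ) X = (x, A) :: ctxUp Γ X
  injm_cons_not_mem : ∀ (Γ : Ctx) (x : ℕ) (A : Ty) (X : Finset ℕ), x ∉ X →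
    injm ((x, A) :: Γ) X = (x, .var x) :: injm Γ X
  injp_cons_not_mem : ∀ (Γ : Ctx) (x : ℕ) (A : Ty) (X : Finset ℕ), x ∉ X →
    injp ((x, A) :: Γ) X = (x, .var x) :: injp Γ X
  ctxUpPM_cons_mem : ∀ (Γ : Ctx) (x : ℕ) (A : Ty) (X : Finset ℕ), x ∈ X →
    ctxUpPM ((x, A) :: Γ) X =
      (vplus x, Ty.subst A (injp Γ (X.erase x))) ::
      (vminus x, Ty.subst A (injm Γ (X.erase x))) :: ctxUp Γ (X.erase x)
  ctxUp_cons_mem : ∀ (Γ : Ctx) (x : ℕ) (A : Ty) (X : Finset ℕ), x ∈ X →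
    ctxUp ((x, A) :: Γ) X =
      (vtilde x, tyUpFresh Γ A x (X.erase x)) :: ctxUpPM ((x, A) :: Γ) X
  injm_cons_mem : ∀ (Γ : Ctx) (x : ℕ) (A : Ty) (X : Finset ℕ), x ∈ X →
    injm ((x, A) :: Γ) X = (x, .var (vminus x)) :: injm Γ (X.erase x)
  injp_cons_mem : ∀ (Γ : Ctx) (x : ℕ) (A : Ty) (X : Finset ℕ), x ∈ X →
    injp ((x, A) :: Γ) X = (x, .var (vplus x)) :: injp Γ (X.erase x)
  /- Defining clauses: naturality of types at a fresh variable. -/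
  tyUpFresh_obj : ∀ (Γ : Ctx) (x : ℕ) (X : Finset ℕ),
    tyUpFresh Γ .obj x X = .arr .obj (.var (vminus x)) (.var (vplus x))
  tyUpFresh_arr : ∀ (Γ : Ctx) (A : Ty) (u v : Tm) (x : ℕ) (X : Finset ℕ),
    tyUpFresh Γ (.arr A u v) x X =
      .arr (.arr A (Tm.subst u (injm Γ X)) (Tm.subst v (injp Γ X)))
        (if Tm.vars v ∩ X = ∅ then .var (vminus x)
         else star (A.dim + 1) (.var (vminus x)) (tmUp Γ v X))
        (if Tm.vars u ∩ X = ∅ then .var (vplus x)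
         else star (A.dim + 1) (tmUp Γ u X) (.var (vplus x)))
  /- Defining clauses: naturality of types at an arbitrary term. -/
  tyUpTm_obj : ∀ (Γ : Ctx) (t : Tm) (X : Finset ℕ),
    tyUpTm Γ .obj t X = .arr .obj (Tm.subst t (injm Γ X)) (Tm.subst t (injp Γ X))
  tyUpTm_arr : ∀ (Γ : Ctx) (A : Ty) (u v : Tm) (t : Tm) (X : Finset ℕ),
    tyUpTm Γ (.arr A u v) t X =
      .arr (.arr A (Tm.subst u (injm Γ X)) (Tm.subst v (injp Γ X)))
        (if Tm.vars v ∩ X = ∅ then Tm.subst t (injm Γ X)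
         else star (A.dim + 1) (Tm.subst t (injm Γ X)) (tmUp Γ v X))
        (if Tm.vars u ∩ X = ∅ then Tm.subst t (injp Γ X)
         else star (A.dim + 1) (tmUp Γ u X) (Tm.subst t (injp Γ X)))
  /- Defining clauses: naturality of terms. -/
  tmUp_var : ∀ (Γ : Ctx) (x : ℕ) (X : Finset ℕ),
    tmUp Γ (.var x) X = .var (vtilde x)
  tmUp_coh : ∀ (Γ Δ : Ctx) (A : Ty) (γ : Sub) (X : Finset ℕ),
    tmUp Γ (.coh Δ A γ) X = Tm.subst (cohUp Δ A (preimage γ Δ X)) (subUp Γ γ X)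
  /- Defining clauses: naturality of substitutions. -/
  subUp_nil : ∀ (Γ : Ctx) (X : Finset ℕ), subUp Γ [] X = []
  subUp_cons_empty : ∀ (Γ : Ctx) (γ : Sub) (x : ℕ) (t : Tm) (X : Finset ℕ),
    Tm.vars t ∩ X = ∅ →
    subUp Γ ((x, t) :: γ) X = (x, t) :: subUp Γ γ X
  subUp_cons_nonempty : ∀ (Γ : Ctx) (γ : Sub) (x : ℕ) (t : Tm) (X : Finset ℕ),
    Tm.vars t ∩ X ≠ ∅ →
    subUp Γ ((x, t) :: γ) X =
      (vtilde x, tmUp Γ t X) :: (vplus x, Tm.subst t (injp Γ X)) ::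
      (vminus x, Tm.subst t (injm Γ X)) :: subUp Γ γ X
  /- Defining clause: naturality of coherences at depth 0. -/
  cohUp_depth0 : ∀ (Γ : Ctx) (A : Ty) (X : Finset ℕ), depthCtx Γ X = 0 →
    cohUp Γ A X =
      .coh (ctxUp Γ X) (tyUpTm Γ A (.coh Γ A (idSub Γ)) X) (idSub (ctxUp Γ X))
  /- The binary composite `∗` has its expected typing. -/
  star_wf : ∀ (Γ : Ctx) (B : Ty) (u v w a b : Tm),
    TmWf Γ a (.arr B u v) → TmWf Γ b (.arr B v w) →
    TmWf Γ (star (B.dim + 1) a b) (.arr B u w)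
  /- Clauses and admissibility of the opposite meta-operations. -/
  opCtx_nil : ∀ M, opCtx M [] = []
  opCtx_cons : ∀ (M : Finset ℤ) (Γ : Ctx) (x : ℕ) (A : Ty),
    opCtx M ((x, A) :: Γ) = (x, opTy M A) :: opCtx M Γ
  opTy_obj : ∀ M, opTy M .obj = .obj
  opTm_var : ∀ (M : Finset ℤ) (x : ℕ), opTm M (.var x) = .var x
  opCtx_wf : ∀ (M : Finset ℤ) (Γ : Ctx), CtxWf Γ → CtxWf (opCtx M Γ)
  opTm_wf : ∀ (M : Finset ℤ) (Γ : Ctx) (t : Tm) (A : Ty),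
    TmWf Γ t A → TmWf (opCtx M Γ) (opTm M t) (opTy M A)


/-!
Induct on the derivation of `Γ ⊢ps`. Extending `Γ` by `y` and `f : z → y`, the source boundary
either drops the pair `y, f` or keeps it, so a variable of dimension at most `i` is never lost.
So does the target boundary, except at the critical dimension `i = dim z`, where it also replaces
the head of `∂ᵢ⁺Γ` by `y`. That head is the `i`-dimensional iterated target of the focus `z`,
which is `z` itself, and a variable of depth 0 cannot be `z` since `z` occurs in the type of `f`.
-/

/-- `iterTgt i t C` is the `i`-dimensional iterated target of `t : C`, or `t` itself when
`dim t ≤ i`. -/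
def iterTgt (i : ℤ) : Tm → Ty → Tm
  | t, .obj => t
  | t, .arr A _ v => if A.dim + 2 ≤ i then t else iterTgt i v A

lemma iterTgt_of_dim_le {C : Ty} {i : ℤ} (h : C.dim + 1 ≤ i) (t : Tm) : iterTgt i t C = t := by
  cases C with
  | obj => rfl
  | arr A u v => exact if_pos (by simp only [Ty.dim] at h; omega)

lemma iterTgt_arr_of_le {A : Ty} {i : ℤ} (h : i ≤ A.dim + 1) (t u v : Tm) :
    iterTgt i t (.arr A u v) = iterTgt i v A :=
  if_neg (by omega)

lemma Ty.neg_one_le_dim : ∀ A : Ty, -1 ≤ A.dim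
  | .obj => le_rfl
  | .arr A _ _ => by have := A.neg_one_le_dim; simp only [Ty.dim]; omega

lemma iterTgt_congr {C : Ty} {i : ℤ} (h0 : 0 ≤ i) (h : i ≤ C.dim) (t t' : Tm) :
    iterTgt i t C = iterTgt i t' C := by
  cases C with
  | obj => simp [Ty.dim] at h; omega
  | arr A u v => rw [iterTgt_arr_of_le (by simpa [Ty.dim] using h),
      iterTgt_arr_of_le (by simpa [Ty.dim] using h)]

lemma bdry_cons_cons_of_dim_lt (ε : Bool) {i : ℤ} (f y : ℕ) (Af : Ty) {Ay : Ty}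
    (h : Ay.dim < i - 1) (Γ : Ctx) :
    bdry ε i ((f, Af) :: (y, Ay) :: Γ) = (f, Af) :: (y, Ay) :: bdry ε i Γ := by
  cases ε <;> simp [bdry, show ¬ Ay.dim ≥ i - 1 by omega, show ¬ Ay.dim > i - 1 by omega,
    show Ay.dim ≠ i - 1 by omega]

lemma Ps.exists_bdry_true_eq_cons {Γ : Ctx} {t : Tm} {C : Ty} (h : Ps Γ t C) {i : ℤ}
    (h0 : 0 ≤ i) (hi : i ≤ C.dim + 1) :
    ∃ p tl, bdry true i Γ = p :: tl ∧ Tm.var p.1 = iterTgt i t C := by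
  induction h with
  | base x => exact ⟨_, [], rfl, rfl⟩
  | @ext Γ x A y f hps _ _ _ ih =>
    simp only [Ty.dim] at hi
    rcases lt_trichotomy A.dim (i - 1) with hlt | heq | hgt
    · exact ⟨_, _, bdry_cons_cons_of_dim_lt true f y _ hlt Γ,
        (iterTgt_of_dim_le (by simp only [Ty.dim]; omega) _).symm⟩
    · rw [iterTgt_arr_of_le (by omega)]
      exact ⟨(y, A), (bdry true i Γ).drop 1, by simp [bdry, heq],
        (iterTgt_of_dim_le (by omega) _).symm⟩
    · obtain ⟨p, tl, hb, hp⟩ := ih (by omega)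
      rw [iterTgt_arr_of_le (by omega)]
      exact ⟨p, tl, by simp [bdry, hgt, hb],
        hp.trans (iterTgt_congr h0 (by omega : i ≤ A.dim) _ _)⟩
  | down _ ih =>
    obtain ⟨p, tl, hb, hp⟩ := ih (by simp only [Ty.dim]; omega)
    exact ⟨p, tl, hb, hp.trans (iterTgt_arr_of_le hi _ _ _)⟩

lemma Ps.mem_ctxVars_bdry_of_depth_zero {Γ : Ctx} {t : Tm} {C : Ty} (h : Ps Γ t C) (ε : Bool)
    {i : ℤ} {x : ℕ} {A : Ty} (hx : (x, A) ∈ Γ) (hdepth0 : ∀ y B, (y, B) ∈ Γ → x ∉ Ty.vars B)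
    (hdim : A.dim + 1 ≤ i) : x ∈ ctxVars (bdry ε i Γ) := by
  induction h with
  | base => simp_all [bdry, ctxVars]
  | @ext Γ x₀ A₀ y f hps _ _ _ ih =>
    obtain ⟨hx₀, hy, -⟩ : x ≠ x₀ ∧ x ≠ y ∧ x ∉ A₀.vars := by
      simpa [Ty.vars, Tm.vars] using hdepth0 f _ List.mem_cons_self
    obtain ⟨rfl, rfl⟩ | ⟨rfl, rfl⟩ | hxΓ : (x = f ∧ A = _) ∨ (x = y ∧ A = A₀) ∨ (x, A) ∈ Γ := by
      simpa using hx
    · rw [bdry_cons_cons_of_dim_lt ε _ _ _ (by simp only [Ty.dim] at hdim; omega)]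
      simp [ctxVars]
    · exact absurd rfl hy
    have IH := ih hxΓ fun z B hz => hdepth0 z B (by simp [hz])
    rcases lt_or_ge A₀.dim (i - 1) with hlt | hge
    · rw [bdry_cons_cons_of_dim_lt ε f y _ hlt]
      simp [ctxVars, IH]
    cases ε with
    | false => simpa [bdry, hge] using IH
    | true =>
      rcases hge.lt_or_eq with hgt | heq
      · simpa [bdry, hgt] using IH
      -- at the critical dimension `∂ᵢ⁺` replaces the focus `x₀` by `y`
      obtain ⟨p, tl, hb, hp⟩ := hps.exists_bdry_true_eq_cons (i := i)
        (by have := A₀.neg_one_le_dim; omega) (by omega)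
      rw [iterTgt_of_dim_le (by omega), Tm.var.injEq] at hp
      rw [hb, ctxVars, Finset.mem_insert, hp] at IH
      simpa [bdry, heq, hb, ctxVars, hx₀, hy] using IH
  | down _ ih => exact ih hx hdepth0

/-- **Lemma (depth-0 non-maximal variables lie in both boundaries).** In a
pasting context `Γ`, any variable of depth 0 (occurring in the type of no
variable of `Γ`) of dimension less than `dim Γ` belongs to the variables of
both the source and target boundaries. -/
theorem depth0_nonmax_var_mem_boundaries
    (Γ : Ctx) (x : ℕ) (A : Ty)
    (hps : PsCtx Γ) (hx : (x, A) ∈ Γ)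
    (hdepth0 : ∀ (y : ℕ) (B : Ty), (y, B) ∈ Γ → x ∉ Ty.vars B)
    (hdim : A.dim + 1 < ctxDim Γ) :
    x ∈ ctxVars (srcCtx Γ) ∧ x ∈ ctxVars (tgtCtx Γ) := by
  obtain ⟨z, hz⟩ := hps
  exact ⟨hz.mem_ctxVars_bdry_of_depth_zero false hx hdepth0 (by omega),
    hz.mem_ctxVars_bdry_of_depth_zero true hx hdepth0 (by omega)⟩

end Catt
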